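/- arXiv:2009.01688 — 2 statements merged into one kernel-verified Lean document; each statement's English description precedes it below -/
import Mathlib

section
/- The function T(x) := x²·sin x/(x − sin x) is positive and strictly decreasing on the open interval (0, π). -/
/-!
Differentiating, `T' x = x * (x * sin x + x ^ 2 * cos x - 2 * sin x ^ 2) / (x - sin x) ^ 2`, so the
theorem comes down to `x * sin x + x ^ 2 * cos x < 2 * sin x ^ 2` on `(0, π)`. The difference of the
two sides vanishes to order 6 at `0`, so this needs Taylor polynomials of fairly high degree: integrating
`cos ≤ 1` repeatedly from `0` gives the alternating Maclaurin bounds for `sin` and `cos` on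
`[0, ∞)`. On `(0, 3]` the bounds of degree 5, 7 and 8 reduce the inequality to the positivity of a
quartic in `x ^ 2`; on `[3, π)` already `sin x + x * cos x < 0`.
-/

open Real Set
open scoped Nat

noncomputable def sinTaylor (n : ℕ) (x : ℝ) : ℝ :=
  ∑ k ∈ Finset.range n, (-1) ^ k * x ^ (2 * k + 1) / (2 * k + 1)!

noncomputable def cosTaylor (n : ℕ) (x : ℝ) : ℝ :=
  ∑ k ∈ Finset.range n, (-1) ^ k * x ^ (2 * k) / (2 * k)!

theorem hasDerivAt_sinTaylor (n : ℕ) (x : ℝ) : HasDerivAt (sinTaylor n) (cosTaylor n x) x := by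
  unfold sinTaylor cosTaylor
  refine HasDerivAt.fun_sum fun k _ => ?_
  refine (((hasDerivAt_pow (2 * k + 1) x).const_mul ((-1 : ℝ) ^ k)).div_const
    ((2 * k + 1)! : ℝ)).congr_deriv ?_
  rw [Nat.factorial_succ]
  push_cast
  field_simp

theorem hasDerivAt_cosTaylor_succ (n : ℕ) (x : ℝ) :
    HasDerivAt (cosTaylor (n + 1)) (-sinTaylor n x) x := by
  have hsplit : cosTaylor (n + 1) =
      fun y => ∑ k ∈ Finset.range n, (-1 : ℝ) ^ (k + 1) * y ^ (2 * k + 2) / (2 * k + 2)! + 1 := by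
    ext y
    simp [cosTaylor, Finset.sum_range_succ', mul_add]
  rw [hsplit, sinTaylor, ← Finset.sum_neg_distrib]
  refine (HasDerivAt.fun_sum fun k _ => ?_).add_const 1
  refine (((hasDerivAt_pow (2 * k + 2) x).const_mul ((-1 : ℝ) ^ (k + 1))).div_const
    ((2 * k + 2)! : ℝ)).congr_deriv ?_
  rw [Nat.factorial_succ (2 * k + 1)]
  push_cast
  field_simp
  ring

theorem le_of_hasDerivAt_le {f g f' g' : ℝ → ℝ} (hf : ∀ t, HasDerivAt f (f' t) t)
    (hg : ∀ t, HasDerivAt g (g' t) t) (h₀ : f 0 ≤ g 0) (h' : ∀ t, 0 ≤ t → f' t ≤ g' t)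
    {x : ℝ} (hx : 0 ≤ x) : f x ≤ g x := by
  have hmono : MonotoneOn (g - f) (Ici 0) :=
    monotoneOn_of_hasDerivWithinAt_nonneg (convex_Ici 0)
      (fun t _ => ((hg t).sub (hf t)).continuousAt.continuousWithinAt)
      (fun t _ => ((hg t).sub (hf t)).hasDerivWithinAt)
      (fun t ht => sub_nonneg.2 (h' t (interior_subset ht)))
  have h := hmono self_mem_Ici hx hx
  simp only [Pi.sub_apply] at h
  linarith

section TaylorBounds

variable {n : ℕ} {x : ℝ}

theorem sin_le_sinTaylor_of (h : ∀ t, 0 ≤ t → cos t ≤ cosTaylor n t) (hx : 0 ≤ x) :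
    sin x ≤ sinTaylor n x :=
  le_of_hasDerivAt_le hasDerivAt_sin (hasDerivAt_sinTaylor n) (by simp [sinTaylor]) h hx

theorem sinTaylor_le_sin_of (h : ∀ t, 0 ≤ t → cosTaylor n t ≤ cos t) (hx : 0 ≤ x) :
    sinTaylor n x ≤ sin x :=
  le_of_hasDerivAt_le (hasDerivAt_sinTaylor n) hasDerivAt_sin (by simp [sinTaylor]) h hx

theorem cos_le_cosTaylor_succ_of (h : ∀ t, 0 ≤ t → sinTaylor n t ≤ sin t) (hx : 0 ≤ x) :
    cos x ≤ cosTaylor (n + 1) x :=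
  le_of_hasDerivAt_le hasDerivAt_cos (hasDerivAt_cosTaylor_succ n)
    (by simp [cosTaylor, Finset.sum_range_succ']) (fun t ht => neg_le_neg (h t ht)) hx

theorem cosTaylor_succ_le_cos_of (h : ∀ t, 0 ≤ t → sin t ≤ sinTaylor n t) (hx : 0 ≤ x) :
    cosTaylor (n + 1) x ≤ cos x :=
  le_of_hasDerivAt_le (hasDerivAt_cosTaylor_succ n) hasDerivAt_cos
    (by simp [cosTaylor, Finset.sum_range_succ']) (fun t ht => neg_le_neg (h t ht)) hx

theorem cos_le_cosTaylor (n : ℕ) (hx : 0 ≤ x) : cos x ≤ cosTaylor (2 * n + 1) x := by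
  induction n generalizing x with
  | zero => simpa [cosTaylor] using cos_le_one x
  | succ n ih =>
    have hsin := fun t (ht : 0 ≤ t) => sin_le_sinTaylor_of (fun _ hs => ih hs) ht
    have hcos := fun t (ht : 0 ≤ t) => cosTaylor_succ_le_cos_of hsin ht
    exact cos_le_cosTaylor_succ_of (fun _ ht => sinTaylor_le_sin_of hcos ht) hx

theorem sin_le_sinTaylor (n : ℕ) (hx : 0 ≤ x) : sin x ≤ sinTaylor (2 * n + 1) x :=
  sin_le_sinTaylor_of (fun _ ht => cos_le_cosTaylor n ht) hx

theorem sinTaylor_le_sin (n : ℕ) (hx : 0 ≤ x) : sinTaylor (2 * n + 2) x ≤ sin x :=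
  sinTaylor_le_sin_of
    (fun _ ht => cosTaylor_succ_le_cos_of (fun _ hs => sin_le_sinTaylor n hs) ht) hx

end TaylorBounds

theorem sinTaylor_three (x : ℝ) : sinTaylor 3 x = x - x ^ 3 / 6 + x ^ 5 / 120 := by
  simp [sinTaylor, Finset.sum_range_succ, Nat.factorial]
  ring

theorem sinTaylor_four (x : ℝ) :
    sinTaylor 4 x = x - x ^ 3 / 6 + x ^ 5 / 120 - x ^ 7 / 5040 := by
  simp [sinTaylor, Finset.sum_range_succ, Nat.factorial]
  ring

theorem cosTaylor_five (x : ℝ) :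
    cosTaylor 5 x = 1 - x ^ 2 / 2 + x ^ 4 / 24 - x ^ 6 / 720 + x ^ 8 / 40320 := by
  simp [cosTaylor, Finset.sum_range_succ, Nat.factorial]
  ring

section

variable {x : ℝ}

theorem mul_sin_add_sq_mul_cos_lt_two_mul_sin_sq_of_le_three (hx₀ : 0 < x) (hx₃ : x ≤ 3) :
    x * sin x + x ^ 2 * cos x < 2 * sin x ^ 2 := by
  have hsin_le := sinTaylor_three x ▸ sin_le_sinTaylor 1 hx₀.le
  have hcos_le := cosTaylor_five x ▸ cos_le_cosTaylor 2 hx₀.le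
  have hsin_ge := sinTaylor_four x ▸ sinTaylor_le_sin 1 hx₀.le
  have hy : x ^ 2 ≤ 9 := by nlinarith
  have hsin_ge_nonneg : 0 ≤ x - x ^ 3 / 6 + x ^ 5 / 120 - x ^ 7 / 5040 := by
    nlinarith [mul_nonneg hx₀.le (sub_nonneg.2 hy), pow_pos hx₀ 3, pow_pos hx₀ 5]
  have hquartic :
      0 < 493920 - 63000 * x ^ 2 + 3129 * (x ^ 2) ^ 2 - 84 * (x ^ 2) ^ 3 + (x ^ 2) ^ 4 := by
    nlinarith [mul_nonneg (sq_nonneg x) (sub_nonneg.2 hy),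
      mul_nonneg (pow_nonneg (sq_nonneg x) 2) (sub_nonneg.2 hy), sq_nonneg (x ^ 2 - 9)]
  calc x * sin x + x ^ 2 * cos x
      ≤ x * (x - x ^ 3 / 6 + x ^ 5 / 120)
        + x ^ 2 * (1 - x ^ 2 / 2 + x ^ 4 / 24 - x ^ 6 / 720 + x ^ 8 / 40320) := by gcongr
    _ < 2 * (x - x ^ 3 / 6 + x ^ 5 / 120 - x ^ 7 / 5040) ^ 2 := by
      linear_combination (1 / 12700800 : ℝ) * mul_pos (pow_pos hx₀ 6) hquartic
    _ ≤ 2 * sin x ^ 2 := by gcongr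

theorem sin_add_mul_cos_neg_of_three_le (hx₃ : 3 ≤ x) (hxπ : x < π) :
    sin x + x * cos x < 0 := by
  have hx₀ : 0 < x := by linarith
  have hsin_le := sinTaylor_three x ▸ sin_le_sinTaylor 1 hx₀.le
  have hcos_le := cosTaylor_five x ▸ cos_le_cosTaylor 2 hx₀.le
  have hy₉ : 0 ≤ x ^ 2 - 9 := by nlinarith
  have hy₁₀ : 0 ≤ 10 - x ^ 2 := by nlinarith [pi_lt_d2]
  have hquartic :
      0 < -80640 + 26880 * x ^ 2 - 2016 * (x ^ 2) ^ 2 + 56 * (x ^ 2) ^ 3 - (x ^ 2) ^ 4 := by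
    nlinarith [mul_nonneg hy₉ hy₁₀, mul_nonneg (mul_nonneg hy₉ hy₁₀) hy₉,
      mul_nonneg (mul_nonneg hy₉ hy₁₀) hy₁₀, mul_nonneg hy₉ hy₉]
  calc sin x + x * cos x
      ≤ (x - x ^ 3 / 6 + x ^ 5 / 120)
        + x * (1 - x ^ 2 / 2 + x ^ 4 / 24 - x ^ 6 / 720 + x ^ 8 / 40320) := by gcongr
    _ < 0 := by linear_combination (1 / 40320 : ℝ) * mul_pos hx₀ hquartic

theorem mul_sin_add_sq_mul_cos_lt_two_mul_sin_sq (hx₀ : 0 < x) (hxπ : x < π) :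
    x * sin x + x ^ 2 * cos x < 2 * sin x ^ 2 := by
  rcases le_or_gt x 3 with hx₃ | hx₃
  · exact mul_sin_add_sq_mul_cos_lt_two_mul_sin_sq_of_le_three hx₀ hx₃
  · calc x * sin x + x ^ 2 * cos x = x * (sin x + x * cos x) := by ring
      _ < 0 := mul_neg_of_pos_of_neg hx₀ (sin_add_mul_cos_neg_of_three_le hx₃.le hxπ)
      _ ≤ 2 * sin x ^ 2 := by positivity

theorem sub_sin_ne_zero (hx : x ≠ 0) : x - sin x ≠ 0 := by
  rcases hx.lt_or_gt with hneg | hpos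
  · exact (sub_neg.2 (lt_sin hneg)).ne
  · exact (sub_pos.2 (sin_lt hpos)).ne'

theorem hasDerivAt_sq_mul_sin_div_sub_sin (hx : x ≠ 0) :
    HasDerivAt (fun x : ℝ => x ^ 2 * sin x / (x - sin x))
      (x * (x * sin x + x ^ 2 * cos x - 2 * sin x ^ 2) / (x - sin x) ^ 2) x := by
  have hnum : HasDerivAt (fun x => x ^ 2 * sin x) (2 * x * sin x + x ^ 2 * cos x) x := by
    simpa using (hasDerivAt_pow 2 x).fun_mul (hasDerivAt_sin x)
  have hden : HasDerivAt (fun x => x - sin x) (1 - cos x) x :=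
    (hasDerivAt_id' x).sub (hasDerivAt_sin x)
  refine (hnum.div hden (sub_sin_ne_zero hx)).congr_deriv ?_
  field_simp
  ring

end

theorem T_pos_strictAntiOn :
    (∀ x ∈ Ioo 0 π, 0 < x ^ 2 * sin x / (x - sin x)) ∧
    StrictAntiOn (fun x : ℝ => x ^ 2 * sin x / (x - sin x)) (Ioo 0 π) := by
  have hden : ∀ x ∈ Ioo 0 π, 0 < x - sin x := fun x hx => sub_pos.2 (sin_lt hx.1)
  refine ⟨fun x hx => ?_, ?_⟩
  · exact div_pos (mul_pos (pow_pos hx.1 2) (sin_pos_of_pos_of_lt_pi hx.1 hx.2)) (hden x hx)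
  · have hderiv := fun x (hx : x ∈ Ioo 0 π) => hasDerivAt_sq_mul_sin_div_sub_sin hx.1.ne'
    refine strictAntiOn_of_hasDerivWithinAt_neg (convex_Ioo 0 π)
      (fun x hx => (hderiv x hx).continuousAt.continuousWithinAt)
      (fun x hx => (hderiv x (interior_subset hx)).hasDerivWithinAt) (fun x hx => ?_)
    rw [interior_Ioo] at hx
    have hnum := sub_neg.2 (mul_sin_add_sq_mul_cos_lt_two_mul_sin_sq hx.1 hx.2)
    exact div_neg_of_neg_of_pos (mul_neg_of_pos_of_neg hx.1 hnum) (pow_pos (hden x hx) 2)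
end

section
/- The function P(x) := x²·sin x/(sin x − x·cos x) is positive and strictly decreasing on the open interval (0, π/2). -/
/-!
Writing `D x = sin x - x cos x` (so `D' = x sin x`), the quotient rule gives
`P' x = -x g(x) / D(x)²` with `g(x) = x² + x sin x cos x - 2 sin² x`.
Both `D` and `g` vanish at `0`, `D' > 0` on `(0, π)`, and `g'' = 4 sin x · D(x) > 0` there with
`g'(0) = 0`; so `D`, `g'`, `g` are all positive on `(0, π)`, hence `P > 0` and `P' < 0` on the
larger interval `(0, π)`.
-/

open Real Set

lemma lt_of_hasDerivAt_pos {f f' : ℝ → ℝ} {a b : ℝ}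
    (hf : ∀ x ∈ Icc a b, HasDerivAt f (f' x) x) (hf' : ∀ x ∈ Ioo a b, 0 < f' x)
    {x : ℝ} (hx : x ∈ Ioc a b) : f a < f x := by
  refine strictMonoOn_of_hasDerivWithinAt_pos (convex_Icc a b)
    (fun y hy => (hf y hy).continuousAt.continuousWithinAt) (fun y hy => ?_)
    (by rwa [interior_Icc])
    (left_mem_Icc.2 (hx.1.le.trans hx.2)) (Ioc_subset_Icc_self hx) hx.1
  rw [interior_Icc] at hy ⊢
  exact (hf y (Ioo_subset_Icc_self hy)).hasDerivWithinAt

lemma hasDerivAt_sin_sub_mul_cos (x : ℝ) :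
    HasDerivAt (fun x => sin x - x * cos x) (x * sin x) x :=
  ((hasDerivAt_sin x).sub ((hasDerivAt_id' x).mul (hasDerivAt_cos x))).congr_deriv (by ring)

lemma sin_sub_mul_cos_pos {x : ℝ} (hx₀ : 0 < x) (hxπ : x < π) : 0 < sin x - x * cos x := by
  simpa using lt_of_hasDerivAt_pos (a := 0) (b := π) (fun y _ => hasDerivAt_sin_sub_mul_cos y)
    (fun y hy => mul_pos hy.1 (sin_pos_of_pos_of_lt_pi hy.1 hy.2)) ⟨hx₀, hxπ.le⟩

lemma sq_add_mul_sin_mul_cos_sub_two_mul_sin_sq_pos {x : ℝ} (hx₀ : 0 < x) (hxπ : x < π) :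
    0 < x ^ 2 + x * sin x * cos x - 2 * sin x ^ 2 := by
  have hg'' (y : ℝ) :
      HasDerivAt (fun y => 2 * y - 3 * sin y * cos y + y * (cos y ^ 2 - sin y ^ 2))
      (4 * sin y * (sin y - y * cos y)) y := by
    refine ((((hasDerivAt_id' y).const_mul 2).sub
      (((hasDerivAt_sin y).const_mul 3).mul (hasDerivAt_cos y))).add
      ((hasDerivAt_id' y).mul (((hasDerivAt_cos y).pow 2).sub
        ((hasDerivAt_sin y).pow 2)))).congr_deriv ?_
    simp only [Pi.pow_apply, Pi.sub_apply]
    linear_combination (-2 : ℝ) * sin_sq_add_cos_sq y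
  have hg' (y : ℝ) : HasDerivAt (fun y => y ^ 2 + y * sin y * cos y - 2 * sin y ^ 2)
      (2 * y - 3 * sin y * cos y + y * (cos y ^ 2 - sin y ^ 2)) y := by
    refine (((hasDerivAt_pow 2 y).add (((hasDerivAt_id' y).mul (hasDerivAt_sin y)).mul
      (hasDerivAt_cos y))).sub (((hasDerivAt_sin y).pow 2).const_mul 2)).congr_deriv ?_
    simp only [Pi.mul_apply]
    ring
  have hg'_pos : ∀ y ∈ Ioo 0 π, 0 < 2 * y - 3 * sin y * cos y + y * (cos y ^ 2 - sin y ^ 2) :=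
    fun y hy => by
      simpa using lt_of_hasDerivAt_pos (a := 0) (b := π) (fun z _ => hg'' z)
        (fun z hz => mul_pos (mul_pos four_pos (sin_pos_of_pos_of_lt_pi hz.1 hz.2))
          (sin_sub_mul_cos_pos hz.1 hz.2)) (Ioo_subset_Ioc_self hy)
  simpa using
    lt_of_hasDerivAt_pos (a := 0) (b := π) (fun y _ => hg' y) hg'_pos ⟨hx₀, hxπ.le⟩

noncomputable def P (x : ℝ) : ℝ := x ^ 2 * sin x / (sin x - x * cos x)

lemma P_pos {x : ℝ} (hx₀ : 0 < x) (hxπ : x < π) : 0 < P x :=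
  div_pos (mul_pos (pow_pos hx₀ 2) (sin_pos_of_pos_of_lt_pi hx₀ hxπ))
    (sin_sub_mul_cos_pos hx₀ hxπ)

lemma hasDerivAt_P {x : ℝ} (hx : sin x - x * cos x ≠ 0) :
    HasDerivAt P
      (-(x * (x ^ 2 + x * sin x * cos x - 2 * sin x ^ 2)) / (sin x - x * cos x) ^ 2) x := by
  refine (((hasDerivAt_pow 2 x).mul (hasDerivAt_sin x)).div (hasDerivAt_sin_sub_mul_cos x)
    hx).congr_deriv ?_
  simp only [Pi.mul_apply]
  linear_combination (-x ^ 3 / (sin x - x * cos x) ^ 2) * sin_sq_add_cos_sq x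

lemma P_strictAntiOn : StrictAntiOn P (Ioo 0 π) := by
  refine strictAntiOn_of_deriv_neg (convex_Ioo 0 π)
    (fun x hx =>
      (hasDerivAt_P (sin_sub_mul_cos_pos hx.1 hx.2).ne').continuousAt.continuousWithinAt)
    fun x hx => ?_
  rw [interior_Ioo] at hx
  have hD := sin_sub_mul_cos_pos hx.1 hx.2
  rw [(hasDerivAt_P hD.ne').deriv]
  exact div_neg_of_neg_of_pos
    (neg_neg_of_pos (mul_pos hx.1 (sq_add_mul_sin_mul_cos_sub_two_mul_sin_sq_pos hx.1 hx.2)))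
    (pow_pos hD 2)

theorem P_pos_strictAntiOn :
    (∀ x ∈ Ioo 0 (π / 2), 0 < x ^ 2 * sin x / (sin x - x * cos x)) ∧
    StrictAntiOn (fun x : ℝ => x ^ 2 * sin x / (sin x - x * cos x)) (Ioo 0 (π / 2)) :=
  have hπ : π / 2 < π := half_lt_self pi_pos
  ⟨fun _ hx => P_pos hx.1 (hx.2.trans hπ), P_strictAntiOn.mono (Ioo_subset_Ioo_right hπ.le)⟩
end
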